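/- Let G be connected with m > n (i.e. G has at least two cycles). Then the geometric multiplicity of 1 as an eigenvalue of B equals m − n + 1, i.e. dim ker(B − I) = m − n + 1. -/

import Mathlib

/-!
Row `e` of `B` sums `x` over the darts entering the tail of `e`, except the reverse `ē` of `e`;
so `B x = x` says that `x e + x ē` equals the inflow of `x` at the tail of `e`. The left side is
invariant under reversal, so the inflow is constant along every edge, hence equal to a constant
`c` on the connected graph. Summing `x e + x ē` over all darts gives `2 m c = 2 n c`, so `c = 0`
as `m ≠ n`: the kernel of `B - 1` is the cycle space of antisymmetric dart functions with zero
inflow everywhere. Antisymmetric dart functions form a space of dimension `m`, and by connectivity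
their inflows are exactly the vertex functions with zero sum, a space of dimension `n - 1`.
-/

open Matrix Polynomial BigOperators

variable {V : Type*}

/-- The non-backtracking matrix of a graph `G`, indexed by darts (oriented edges):
`B[(k→l),(i→j)] = 1` if `j = k` and `i ≠ l`, else `0`. -/
def nbMatrix [DecidableEq V] (G : SimpleGraph V) : Matrix G.Dart G.Dart ℂ :=
  fun e f => if f.snd = e.fst ∧ f.fst ≠ e.snd then 1 else 0

theorem Submodule.finrank_map_add_finrank_inf_ker {K M N : Type*} [Field K] [AddCommGroup M]
    [Module K M] [AddCommGroup N] [Module K N] [FiniteDimensional K M]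
    (p : Submodule K M) (f : M →ₗ[K] N) :
    Module.finrank K (p.map f) + Module.finrank K ↥(p ⊓ LinearMap.ker f) =
      Module.finrank K p := by
  rw [← LinearMap.range_domRestrict, ← (f.domRestrict p).finrank_range_add_finrank_ker,
    LinearMap.ker_domRestrict, ← Submodule.map_comap_subtype]
  exact congrArg _ (Submodule.equivSubtypeMap p _).finrank_eq.symm

theorem finrank_ker_linearCombination_one_add_one {K ι : Type*} [Field K] [Fintype ι]
    [Nonempty ι] :
    Module.finrank K (LinearMap.ker (Fintype.linearCombination K (1 : ι → K))) + 1 =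
      Fintype.card ι := by
  classical
  obtain ⟨i⟩ := ‹Nonempty ι›
  have h_surj : Function.Surjective (Fintype.linearCombination K (1 : ι → K)) :=
    fun c => ⟨Pi.single i c, by simp⟩
  have h_rank := (Fintype.linearCombination K (1 : ι → K)).finrank_range_add_finrank_ker
  rw [LinearMap.range_eq_top.2 h_surj, finrank_top, Module.finrank_self,
    Module.finrank_fintype_fun_eq_card] at h_rank
  omega

namespace SimpleGraph

open Finset Module

variable (G : SimpleGraph V)

def Dart.toEdgeSet {G : SimpleGraph V} (d : G.Dart) : G.edgeSet := ⟨d.edge, d.edge_mem⟩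

theorem Dart.toEdgeSet_symm {G : SimpleGraph V} (d : G.Dart) : d.symm.toEdgeSet = d.toEdgeSet :=
  Subtype.ext d.edge_symm

theorem dart_toEdgeSet_surjective : Function.Surjective (Dart.toEdgeSet : G.Dart → G.edgeSet) := by
  rintro ⟨e, he⟩
  induction e using Sym2.ind with
  | _ a b => exact ⟨⟨(a, b), he⟩, rfl⟩

noncomputable def orientation : G.edgeSet → G.Dart :=
  Function.surjInv G.dart_toEdgeSet_surjective

variable {G} in
theorem toEdgeSet_orientation (e : G.edgeSet) : (G.orientation e).toEdgeSet = e :=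
  Function.surjInv_eq _ e

variable {G} in
theorem orientation_toEdgeSet_eq_or (d : G.Dart) :
    G.orientation d.toEdgeSet = d ∨ G.orientation d.toEdgeSet = d.symm :=
  (dart_edge_eq_iff _ _).1 (congrArg Subtype.val (toEdgeSet_orientation d.toEdgeSet))

theorem sum_dart_symm {M : Type*} [AddCommMonoid M] [Fintype V] [DecidableRel G.Adj]
    (x : G.Dart → M) : ∑ d : G.Dart, x d.symm = ∑ d, x d :=
  Equiv.sum_comp (Dart.symm_involutive.toPerm _) x

variable (K : Type*)

section Ring

variable [Ring K]

def antisymmDartFun : Submodule K (G.Dart → K) where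
  carrier := {x | ∀ d, x d.symm = -x d}
  add_mem' hx hy d := by simp [hx d, hy d, add_comm]
  zero_mem' d := by simp
  smul_mem' c x hx d := by simp [hx d]

variable {G K} in
theorem sum_eq_zero_of_mem_antisymmDartFun [Fintype V] [DecidableRel G.Adj] {x : G.Dart → K}
    (hx : x ∈ G.antisymmDartFun K) : ∑ d, x d = 0 :=
  sum_ninvolution Dart.symm (fun d => by rw [hx d, add_neg_cancel]) (fun d _ => d.symm_ne)
    (fun _ => mem_univ _) Dart.symm_symm

variable {G K} in
theorem single_sub_single_symm_mem_antisymmDartFun [DecidableEq V] (d : G.Dart) :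
    (Pi.single d 1 - Pi.single d.symm 1 : G.Dart → K) ∈ G.antisymmDartFun K := by
  intro e
  simp only [Pi.sub_apply, Pi.single_apply, Dart.symm_involutive.eq_iff]
  abel

open scoped Classical in
noncomputable def antisymmDartFunEquiv : G.antisymmDartFun K ≃ₗ[K] (G.edgeSet → K) where
  toFun x e := x.1 (G.orientation e)
  map_add' _ _ := rfl
  map_smul' _ _ := rfl
  invFun y := ⟨fun d => if G.orientation d.toEdgeSet = d then y d.toEdgeSet else -y d.toEdgeSet,
    fun d => by
      dsimp only
      rw [Dart.toEdgeSet_symm]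
      rcases orientation_toEdgeSet_eq_or d with h | h
      · simp [h, d.symm_ne.symm]
      · simp [h, d.symm_ne]⟩
  left_inv x := by
    ext d
    rcases orientation_toEdgeSet_eq_or d with h | h
    · simp [h]
    · simp [h, d.symm_ne, x.2 d]
  right_inv y := by
    ext e
    simp [toEdgeSet_orientation]

variable [Fintype V] [DecidableEq V] [DecidableRel G.Adj]

def inflow : (G.Dart → K) →ₗ[K] (V → K) where
  toFun x u := ∑ d with d.snd = u, x d
  map_add' x y := by ext u; simp [sum_add_distrib]
  map_smul' c x := by ext u; simp [mul_sum]

def cycleSpace : Submodule K (G.Dart → K) := G.antisymmDartFun K ⊓ LinearMap.ker (G.inflow K)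

variable {G K}

theorem inflow_apply (x : G.Dart → K) (u : V) : G.inflow K x u = ∑ d with d.snd = u, x d := rfl

theorem sum_inflow (x : G.Dart → K) : ∑ u, G.inflow K x u = ∑ d, x d :=
  sum_fiberwise _ _ _

theorem inflow_single (d : G.Dart) (c : K) : G.inflow K (Pi.single d c) = Pi.single d.snd c := by
  ext u
  rw [inflow_apply, sum_filter, sum_eq_single d (fun f _ hf => by simp [hf]) (by simp)]
  simp [Pi.single_apply, eq_comm]

theorem inflow_single_sub_single_symm (d : G.Dart) :
    G.inflow K (Pi.single d 1 - Pi.single d.symm 1) = Pi.single d.snd 1 - Pi.single d.fst 1 := by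
  rw [map_sub, inflow_single, inflow_single, Dart.symm_toProd]; rfl

theorem inflow_eq_of_reachable {x : G.Dart → K}
    (hx : ∀ d, x d + x d.symm = G.inflow K x d.fst) {u v : V} (h : G.Reachable u v) :
    G.inflow K x u = G.inflow K x v := by
  obtain ⟨p⟩ := h
  induction p with
  | nil => rfl
  | @cons a b c hab _ ih =>
    let d : G.Dart := ⟨(a, b), hab⟩
    calc G.inflow K x a = x d + x d.symm := (hx d).symm
      _ = x d.symm + x d.symm.symm := by rw [Dart.symm_symm, add_comm]
      _ = G.inflow K x b := hx d.symm
      _ = G.inflow K x c := ih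

theorem map_inflow_antisymmDartFun (hconn : G.Connected) :
    (G.antisymmDartFun K).map (G.inflow K) =
      LinearMap.ker (Fintype.linearCombination K (1 : V → K)) := by
  apply le_antisymm
  · rintro _ ⟨x, hx, rfl⟩
    simp [Fintype.linearCombination_apply, sum_inflow, sum_eq_zero_of_mem_antisymmDartFun hx]
  · have h_walk : ∀ u v, (Pi.single v 1 - Pi.single u 1 : V → K) ∈
        (G.antisymmDartFun K).map (G.inflow K) := by
      intro u v
      induction (hconn u v).some with
      | nil => simp
      | @cons a b c hab _ ih =>
        rw [← sub_add_sub_cancel _ (Pi.single b 1) _]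
        exact add_mem ih ⟨_, single_sub_single_symm_mem_antisymmDartFun ⟨(a, b), hab⟩,
          inflow_single_sub_single_symm _⟩
    intro f hf
    obtain ⟨v₀⟩ := hconn.nonempty
    have h_sum : ∑ u, f u = 0 := by simpa [Fintype.linearCombination_apply] using hf
    have h_decomp : f = ∑ u, f u • (Pi.single u 1 - Pi.single v₀ 1) := by
      simp only [smul_sub, sum_sub_distrib, ← sum_smul, h_sum, zero_smul, sub_zero]
      conv_lhs => rw [← univ_sum_single f]
      simp_rw [← Pi.single_smul', smul_eq_mul, mul_one]
    rw [h_decomp]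
    exact sum_mem fun u _ => Submodule.smul_mem _ _ (h_walk v₀ u)

end Ring

section Field

variable [Field K]

theorem finrank_antisymmDartFun [Fintype G.edgeSet] :
    finrank K (G.antisymmDartFun K) = Fintype.card G.edgeSet := by
  rw [(G.antisymmDartFunEquiv K).finrank_eq, Module.finrank_fintype_fun_eq_card]

variable [Fintype V] [DecidableEq V] [DecidableRel G.Adj]

theorem finrank_cycleSpace_add_card (hconn : G.Connected) :
    finrank K (G.cycleSpace K) + Fintype.card V = #G.edgeFinset + 1 := by
  have h_cycle := (G.antisymmDartFun K).finrank_map_add_finrank_inf_ker (G.inflow K)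
  rw [map_inflow_antisymmDartFun hconn, finrank_antisymmDartFun, ← edgeFinset_card] at h_cycle
  have : Nonempty V := hconn.nonempty
  have h_sum := finrank_ker_linearCombination_one_add_one (K := K) (ι := V)
  rw [cycleSpace]
  omega

variable {G K} in
theorem forall_add_symm_eq_inflow_iff_mem_cycleSpace [CharZero K] (hconn : G.Connected)
    (hm : Fintype.card V ≠ #G.edgeFinset) {x : G.Dart → K} :
    (∀ d, x d + x d.symm = G.inflow K x d.fst) ↔ x ∈ G.cycleSpace K := by
  constructor
  · intro hx
    obtain ⟨v₀⟩ := hconn.nonempty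
    set c := G.inflow K x v₀
    have h_const : ∀ u, G.inflow K x u = c := fun u => inflow_eq_of_reachable hx (hconn u v₀)
    have h_count : 2 * (Fintype.card V : K) * c = 2 * #G.edgeFinset * c := calc
      2 * (Fintype.card V : K) * c = 2 * ∑ u, G.inflow K x u := by
        rw [sum_congr rfl fun u _ => h_const u, sum_const, card_univ, nsmul_eq_mul]; ring
      _ = ∑ d, (x d + x d.symm) := by rw [sum_inflow, sum_add_distrib, sum_dart_symm]; ring
      _ = ∑ _d : G.Dart, c := sum_congr rfl fun d _ => (hx d).trans (h_const _)
      _ = 2 * #G.edgeFinset * c := by simp [dart_card_eq_twice_card_edges]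
    have hc : c = 0 := by
      have h_factor : (2 * ((#G.edgeFinset : K) - Fintype.card V)) * c = 0 := by
        linear_combination -h_count
      refine (mul_eq_zero.1 h_factor).resolve_left (mul_ne_zero two_ne_zero ?_)
      exact sub_ne_zero.2 (Nat.cast_injective.ne hm.symm)
    have h_zero : G.inflow K x = 0 := funext fun u => (h_const u).trans hc
    refine ⟨fun d => eq_neg_of_add_eq_zero_right ?_, h_zero⟩
    rw [hx d, h_zero, Pi.zero_apply]
  · rintro ⟨h_anti, h_ker⟩ d
    rw [h_anti d, add_neg_cancel, LinearMap.mem_ker.1 h_ker, Pi.zero_apply]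

end Field

end SimpleGraph

open SimpleGraph Finset

section NonBacktracking

variable [Fintype V] [DecidableEq V] {G : SimpleGraph V} [DecidableRel G.Adj]

theorem nbMatrix_mulVec_apply (x : G.Dart → ℂ) (e : G.Dart) :
    (nbMatrix G *ᵥ x) e = G.inflow ℂ x e.fst - x e.symm := by
  have h_filter : ({f : G.Dart | f.snd = e.fst ∧ f.fst ≠ e.snd} : Finset _) =
      ({f : G.Dart | f.snd = e.fst} : Finset _).erase e.symm := by
    ext f
    simp only [mem_filter, mem_univ, true_and, mem_erase, ne_eq, Dart.ext_iff, Dart.symm_toProd,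
      Prod.ext_iff, Prod.fst_swap, Prod.snd_swap, not_and]
    tauto
  simp only [mulVec, dotProduct, nbMatrix, ite_mul, one_mul, zero_mul, ← sum_filter, h_filter]
  rw [sum_erase_eq_sub (by simp), inflow_apply]

theorem mem_ker_nbMatrix_sub_one_iff (x : G.Dart → ℂ) :
    x ∈ LinearMap.ker (nbMatrix G - 1).mulVecLin ↔ ∀ e, x e + x e.symm = G.inflow ℂ x e.fst := by
  simp only [LinearMap.mem_ker, mulVecLin_apply, sub_mulVec, one_mulVec, sub_eq_zero, funext_iff,
    nbMatrix_mulVec_apply]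
  exact forall_congr' fun e => by rw [sub_eq_iff_eq_add, eq_comm]

theorem ker_nbMatrix_sub_one (hconn : G.Connected) (hm : Fintype.card V ≠ #G.edgeFinset) :
    LinearMap.ker (nbMatrix G - 1).mulVecLin = G.cycleSpace ℂ := by
  ext x
  rw [mem_ker_nbMatrix_sub_one_iff, forall_add_symm_eq_inflow_iff_mem_cycleSpace hconn hm]

end NonBacktracking

theorem nbMatrix_geometric_multiplicity_one
    [DecidableEq V] [Fintype V] (G : SimpleGraph V) [DecidableRel G.Adj]
    (hconn : G.Connected) (hm : Fintype.card V < G.edgeFinset.card) :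
    Module.finrank ℂ ↥(LinearMap.ker (nbMatrix G - 1).mulVecLin)
      = G.edgeFinset.card - Fintype.card V + 1 := by
  have h_dim := G.finrank_cycleSpace_add_card ℂ hconn
  rw [ker_nbMatrix_sub_one hconn hm.ne]
  omega
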